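/- arXiv:0903.1832 — 3 statements merged into one kernel-verified Lean document; each statement's English description precedes it below -/
import Mathlib

section
/- Let X be an irreducible birth-and-death chain on ⟦b,a⟧ with transition probabilities p_x, q_x and reversible invariant probability measure π. Then for all integers b ≤ j < n ≤ a: E[T_{j→n}²] ≤ 2·E[T_{j→n}]² + 2·E[T_{b→j}]·E[T_{j→n}] − E[T_{j→n}]. -/
/-!
Write `T = T_{j→n}`. Summing by parts, `E[T² + T] = 2 ∑_{s,u} P(T > s + u)`, and by the Markov
property at time `s`, `∑_u P(T > s + u) = E[E_{X_s}[T_n]; T > s]`. Since the chain moves by unit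
steps, on `{T > s}` it sits in `⟦b,n)`, and for such `x`, `E_x[T_n] ≤ E_b[T_j] + E_j[T_n]`: if
`x ≥ j` the chain from `j` has to pass through `x` on its way to `n`, and if `x < j` it first
reaches `j`, which it does faster from `x` than from `b`. Summing over `s`,
`E[T² + T] ≤ 2 (E_b[T_j] + E_j[T_n]) E[T]`.
-/

open MeasureTheory Filter Topology ENNReal ProbabilityTheory

noncomputable section

/-- First time `t ≥ 0` at which the path `ω` visits the set `A`,
with value `⊤` if the path never visits `A`. -/
def hitTime {S : Type*} (A : Set S) (ω : ℕ → S) : ℝ≥0∞ :=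
  ⨅ (t : ℕ) (_ : ω t ∈ A), (t : ℝ≥0∞)

/-- First time `t > 0` at which the path `ω` visits the set `A`. -/
def hitTimePos {S : Type*} (A : Set S) (ω : ℕ → S) : ℝ≥0∞ :=
  ⨅ (t : ℕ) (_ : 0 < t) (_ : ω t ∈ A), (t : ℝ≥0∞)

/-- First time `t ≥ r` at which the path `ω` visits the set `A`. -/
def hitTimeAfter {S : Type*} (A : Set S) (r : ℝ≥0∞) (ω : ℕ → S) : ℝ≥0∞ :=
  ⨅ (t : ℕ) (_ : r ≤ (t : ℝ≥0∞)) (_ : ω t ∈ A), (t : ℝ≥0∞)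

/-- One-step transition probabilities of a birth-and-death chain on `ℤ` with
birth rates `p` and death rates `q` (and holding probability `1 - p x - q x`). -/
def bdStep (p q : ℤ → ℝ) (x y : ℤ) : ℝ :=
  if y = x + 1 then p x else if y = x - 1 then q x
  else if y = x then 1 - p x - q x else 0

/-- An irreducible discrete-time birth-and-death chain on the integer interval
`⟦b,a⟧`, given by its transition probabilities `p x = p(x,x+1) > 0` (for `b ≤ x ≤ a-1`),
`q x = p(x,x-1) > 0` (for `b+1 ≤ x ≤ a`), and by the laws `law x` of the chain started
at `x` on path space `ℕ → ℤ` (characterized by the cylinder/Markov property `markov`). -/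
structure BDChain (b a : ℤ) where
  p : ℤ → ℝ
  q : ℤ → ℝ
  law : ℤ → Measure (ℕ → ℤ)
  prob : ∀ x, IsProbabilityMeasure (law x)
  p_pos : ∀ x, b ≤ x → x ≤ a - 1 → 0 < p x
  q_pos : ∀ x, b + 1 ≤ x → x ≤ a → 0 < q x
  p_zero : ∀ x, x < b ∨ a ≤ x → p x = 0
  q_zero : ∀ x, x ≤ b ∨ a < x → q x = 0
  r_nonneg : ∀ x, b ≤ x → x ≤ a → p x + q x ≤ 1
  init : ∀ x, law x {ω | ω 0 = x} = 1
  markov : ∀ (x : ℤ) (u : ℕ → ℤ) (n : ℕ),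
    law x {ω | ∀ i ≤ n + 1, ω i = u i}
      = law x {ω | ∀ i ≤ n, ω i = u i} * ENNReal.ofReal (bdStep p q (u n) (u (n + 1)))

/-- Mean hitting time `E[T_{x → y}]` for the birth-and-death chain `c`. -/
def BDChain.eT {b a : ℤ} (c : BDChain b a) (x y : ℤ) : ℝ≥0∞ :=
  ∫⁻ ω, hitTime {y} ω ∂(c.law x)

/-- Mean hitting time `E[T_{x → A}]` of a set `A` for the birth-and-death chain `c`. -/
def BDChain.eTset {b a : ℤ} (c : BDChain b a) (x : ℤ) (A : Set ℤ) : ℝ≥0∞ :=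
  ∫⁻ ω, hitTime A ω ∂(c.law x)

/-- Second moment `E[T_{x → y}²]` of the hitting time. -/
def BDChain.eT2 {b a : ℤ} (c : BDChain b a) (x y : ℤ) : ℝ≥0∞ :=
  ∫⁻ ω, (hitTime {y} ω) ^ 2 ∂(c.law x)

/-- `π` is the (unique) reversible invariant probability measure of the
birth-and-death chain `c` on `⟦b,a⟧`: it is positive on `⟦b,a⟧`, vanishes outside,
has total mass one, and satisfies the reversibility (detailed balance) relation
`π(x) q_x = π(x-1) p_{x-1}`. -/
def BDChain.IsStationary {b a : ℤ} (c : BDChain b a) (π : ℤ → ℝ) : Prop :=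
  (∀ x, b ≤ x → x ≤ a → 0 < π x) ∧ (∀ x, x < b ∨ a < x → π x = 0) ∧
  (∑ x ∈ Finset.Icc b a, π x) = 1 ∧
  (∀ x, b + 1 ≤ x → x ≤ a → π x * c.q x = π (x - 1) * c.p (x - 1))


namespace PathSpace

variable {S : Type*}

def shift (s : ℕ) (ω : ℕ → S) : ℕ → S := fun t => ω (s + t)

def cyl (u : ℕ → S) (m : ℕ) : Set (ℕ → S) := {ω | ∀ i ≤ m, ω i = u i}

def DeterminedUpTo (s : ℕ) (X : Set (ℕ → S)) : Prop :=
  ∀ ω ω' : ℕ → S, (∀ i ≤ s, ω i = ω' i) → ω ∈ X → ω' ∈ X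

def ofFin (s : ℕ) (w : Fin (s + 1) → S) : ℕ → S := fun k => w ⟨min k s, by omega⟩

lemma ofFin_apply {s i : ℕ} (w : Fin (s + 1) → S) (hi : i ≤ s) :
    ofFin s w i = w ⟨i, by omega⟩ := by
  simp [ofFin, Nat.min_eq_left hi]

lemma mem_cyl_ofFin (s : ℕ) (ω : ℕ → S) : ω ∈ cyl (ofFin s fun i => ω i) s :=
  fun _ hi => (ofFin_apply (fun k : Fin (s + 1) => ω k) hi).symm

lemma pairwise_disjoint_cyl_ofFin {s : ℕ} {P : (Fin (s + 1) → S) → Prop} :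
    Pairwise (Function.onFun Disjoint fun w : {w // P w} => cyl (ofFin s w.1) s) := by
  intro w w' hne
  refine Set.disjoint_left.mpr fun ω hω hω' => hne (Subtype.ext (funext fun i => ?_))
  have hi : (i : ℕ) ≤ s := Nat.lt_succ_iff.mp i.2
  have h := (hω i hi).symm.trans (hω' i hi)
  rwa [ofFin_apply _ hi, ofFin_apply _ hi] at h

lemma DeterminedUpTo.eq_iUnion {s : ℕ} {X : Set (ℕ → S)} (hX : DeterminedUpTo s X) :
    X = ⋃ w : {w : Fin (s + 1) → S // ofFin s w ∈ X}, cyl (ofFin s w.1) s := by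
  ext ω
  simp only [Set.mem_iUnion]
  constructor
  · exact fun h => ⟨⟨_, hX ω _ (mem_cyl_ofFin s ω) h⟩, mem_cyl_ofFin s ω⟩
  · rintro ⟨⟨w, hw⟩, hω⟩
    exact hX _ ω (fun i hi => (hω i hi).symm) hw

lemma cyl_inter_cyl_of_le {u v : ℕ → S} {m k : ℕ} (h : m ≤ k)
    (hne : (cyl u m ∩ cyl v k).Nonempty) : cyl u m ∩ cyl v k = cyl v k := by
  obtain ⟨ω, hωu, hωv⟩ := hne
  refine Set.inter_eq_right.mpr fun ρ hρ i hi => ?_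
  rw [hρ i (hi.trans h), ← hωv i (hi.trans h), hωu i hi]

lemma isPiSystem_cyl : IsPiSystem {X : Set (ℕ → S) | ∃ u m, X = cyl u m} := by
  rintro _ ⟨u, m, rfl⟩ _ ⟨v, k, rfl⟩ hne
  rcases le_total m k with h | h
  · exact ⟨v, k, cyl_inter_cyl_of_le h hne⟩
  · rw [Set.inter_comm] at hne ⊢
    exact ⟨u, m, cyl_inter_cyl_of_le h hne⟩

def glue (u : ℕ → S) (s : ℕ) (v : ℕ → S) : ℕ → S := fun i => if i ≤ s then u i else v (i - s)

lemma glue_of_le {u v : ℕ → S} {s i : ℕ} (h : i ≤ s) : glue u s v i = u i := if_pos h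

lemma glue_add {u v : ℕ → S} {s : ℕ} (h : u s = v 0) (t : ℕ) : glue u s v (s + t) = v t := by
  rcases Nat.eq_zero_or_pos t with rfl | ht
  · simpa [glue] using h
  · simp [glue, show ¬ s + t ≤ s by omega]

lemma shift_preimage_cyl_inter_cyl {u v : ℕ → S} {s m : ℕ} (h : u s = v 0) :
    shift s ⁻¹' cyl v m ∩ cyl u s = cyl (glue u s v) (s + m) := by
  ext ω
  simp only [Set.mem_inter_iff, Set.mem_preimage]
  constructor
  · rintro ⟨hv, hu⟩ i hi
    by_cases his : i ≤ s
    · rw [glue_of_le his]; exact hu i his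
    · obtain ⟨t, rfl⟩ := Nat.exists_eq_add_of_le (le_of_not_ge his)
      rw [glue_add h]
      exact hv t (by omega)
  · intro hω
    exact ⟨fun t ht => (hω (s + t) (by omega)).trans (glue_add h t),
      fun i hi => (hω i (by omega)).trans (glue_of_le hi)⟩

lemma shift_preimage_cyl_inter_cyl_of_ne {u v : ℕ → S} {s m : ℕ} (h : u s ≠ v 0) :
    shift s ⁻¹' cyl v m ∩ cyl u s = ∅ :=
  Set.eq_empty_iff_forall_notMem.mpr fun _ ⟨hv, hu⟩ =>
    h ((hu s le_rfl).symm.trans (hv 0 (Nat.zero_le m)))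

lemma measurable_shift [MeasurableSpace S] (s : ℕ) : Measurable (shift (S := S) s) :=
  measurable_pi_lambda _ fun t => measurable_pi_apply (s + t)

section Measurable

variable [MeasurableSpace S] [DiscreteMeasurableSpace S]

lemma measurableSet_preimage_eval (i : ℕ) (B : Set S) :
    MeasurableSet {ω : ℕ → S | ω i ∈ B} :=
  measurable_pi_apply i MeasurableSet.of_discrete

lemma measurableSet_cyl (u : ℕ → S) (m : ℕ) : MeasurableSet (cyl u m) := by
  have : cyl u m = ⋂ i ∈ Finset.range (m + 1), {ω | ω i ∈ ({u i} : Set S)} := by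
    ext ω; simp [cyl]
  rw [this]
  exact Finset.measurableSet_biInter _ fun i _ => measurableSet_preimage_eval i _

variable [Countable S]

lemma DeterminedUpTo.measurableSet {s : ℕ} {X : Set (ℕ → S)} (hX : DeterminedUpTo s X) :
    MeasurableSet X := by
  rw [hX.eq_iUnion]
  exact MeasurableSet.iUnion fun _ => measurableSet_cyl _ _

lemma generateFrom_cyl :
    (inferInstance : MeasurableSpace (ℕ → S)) =
      MeasurableSpace.generateFrom {X | ∃ u m, X = cyl u m} := by
  refine le_antisymm (iSup_le fun i => ?_) (MeasurableSpace.generateFrom_le ?_)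
  · rintro _ ⟨B, -, rfl⟩
    have hdet : DeterminedUpTo i ((fun ω : ℕ → S => ω i) ⁻¹' B) :=
      fun ω ω' h hω => by rw [Set.mem_preimage, ← h i le_rfl]; exact hω
    rw [hdet.eq_iUnion]
    exact MeasurableSet.iUnion fun w =>
      MeasurableSpace.measurableSet_generateFrom ⟨_, i, rfl⟩
  · rintro _ ⟨u, m, rfl⟩
    exact measurableSet_cyl u m

end Measurable

end PathSpace

lemma exists_eq_of_natAbs_sub_le_one {ω : ℕ → ℤ} (hω : ∀ t, (ω (t + 1) - ω t).natAbs ≤ 1) {y : ℤ}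
    {t : ℕ} (h0 : ω 0 ≤ y) (ht : y ≤ ω t) : ∃ s ≤ t, ω s = y := by
  induction t with
  | zero => exact ⟨0, le_rfl, le_antisymm h0 ht⟩
  | succ t ih =>
    by_cases hy : y ≤ ω t
    · obtain ⟨s, hs, hωs⟩ := ih hy
      exact ⟨s, hs.trans t.le_succ, hωs⟩
    · have := hω t
      exact ⟨t + 1, le_rfl, by omega⟩

section HitTime

open PathSpace

variable {S : Type*} {A : Set S} {ω : ℕ → S}

lemma hitTime_le {t : ℕ} (h : ω t ∈ A) : hitTime A ω ≤ t := iInf₂_le t h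

lemma le_hitTime {r : ℝ≥0∞} (h : ∀ t : ℕ, ω t ∈ A → r ≤ t) : r ≤ hitTime A ω := le_iInf₂ h

lemma hitTime_eq_top (h : ∀ t, ω t ∉ A) : hitTime A ω = ⊤ :=
  iInf₂_eq_top.mpr fun t ht => absurd ht (h t)

lemma hitTime_eq_natCast {m : ℕ} (hm : ω m ∈ A) (hmin : ∀ t < m, ω t ∉ A) :
    hitTime A ω = m :=
  le_antisymm (hitTime_le hm) <| le_hitTime fun t ht =>
    Nat.cast_le.mpr (not_lt.mp fun hlt => hmin t hlt ht)

lemma exists_hitTime_eq_natCast (h : ∃ t, ω t ∈ A) : ∃ m : ℕ, hitTime A ω = m := by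
  classical
  exact ⟨Nat.find h, hitTime_eq_natCast (Nat.find_spec h) fun _ => Nat.find_min h⟩

lemma hitTime_eq_add_hitTime_shift {s : ℕ} (h : ∀ t < s, ω t ∉ A) :
    hitTime A ω = s + hitTime A (shift s ω) := by
  refine le_antisymm ?_ (le_hitTime fun t ht => ?_)
  · change hitTime A ω ≤ s + ⨅ (t : ℕ) (_ : shift s ω t ∈ A), (t : ℝ≥0∞)
    rw [ENNReal.add_iInf]
    refine le_iInf fun t => ?_
    rw [ENNReal.add_iInf]
    exact le_iInf fun ht => by exact_mod_cast hitTime_le (t := s + t) ht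
  · have hst : s ≤ t := not_lt.mp fun hlt => h t hlt ht
    have hmem : shift s ω (t - s) ∈ A := by rwa [shift, Nat.add_sub_cancel' hst]
    calc (s : ℝ≥0∞) + hitTime A (shift s ω) ≤ s + (t - s : ℕ) := by gcongr; exact hitTime_le hmem
      _ = t := by rw [← Nat.cast_add, Nat.add_sub_cancel' hst]

def avoidUpTo (A : Set S) (k : ℕ) : Set (ℕ → S) := {ω | ∀ t ≤ k, ω t ∉ A}

lemma mem_avoidUpTo_iff {k : ℕ} : ω ∈ avoidUpTo A k ↔ (k : ℝ≥0∞) < hitTime A ω := by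
  constructor
  · intro h
    calc (k : ℝ≥0∞) < (k + 1 : ℕ) := by exact_mod_cast k.lt_succ_self
      _ ≤ hitTime A ω := le_hitTime fun t ht =>
        Nat.cast_le.mpr (not_le.mp fun htk => h t htk ht)
  · intro h t htk ht
    exact (hitTime_le ht).not_gt (h.trans_le' (by exact_mod_cast htk))

lemma determinedUpTo_avoidUpTo (A : Set S) (k : ℕ) : DeterminedUpTo k (avoidUpTo A k) :=
  fun _ _ h hω t ht => h t ht ▸ hω t ht

lemma tsum_ite_natCast_lt (g : ℕ → ℝ≥0∞) (m : ℕ) :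
    ∑' k : ℕ, (if (k : ℝ≥0∞) < m then g k else 0) = ∑ k ∈ Finset.range m, g k := by
  rw [tsum_eq_sum (s := Finset.range m) fun k hk => if_neg (by simpa using hk)]
  exact Finset.sum_congr rfl fun k hk => if_pos (by simpa using hk)

lemma tsum_indicator_avoidUpTo (g : ℕ → ℝ≥0∞) :
    ∑' k, (avoidUpTo A k).indicator (fun _ => g k) ω =
      ∑' k : ℕ, (if (k : ℝ≥0∞) < hitTime A ω then g k else 0) := by
  simp only [Set.indicator, mem_avoidUpTo_iff]

lemma hitTime_eq_tsum_indicator (A : Set S) (ω : ℕ → S) :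
    hitTime A ω = ∑' k, (avoidUpTo A k).indicator (fun _ => (1 : ℝ≥0∞)) ω := by
  rw [tsum_indicator_avoidUpTo]
  by_cases h : ∃ t, ω t ∈ A
  · obtain ⟨m, hm⟩ := exists_hitTime_eq_natCast h
    rw [hm, tsum_ite_natCast_lt]
    simp
  · push Not at h
    simp [hitTime_eq_top h]

lemma hitTime_sq_add_hitTime_eq_tsum_indicator (A : Set S) (ω : ℕ → S) :
    hitTime A ω ^ 2 + hitTime A ω =
      ∑' k, (avoidUpTo A k).indicator (fun _ => 2 * ((k : ℝ≥0∞) + 1)) ω := by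
  rw [tsum_indicator_avoidUpTo]
  by_cases h : ∃ t, ω t ∈ A
  · obtain ⟨m, hm⟩ := exists_hitTime_eq_natCast h
    rw [hm, tsum_ite_natCast_lt]
    clear hm
    induction m with
    | zero => simp
    | succ m ih => rw [Finset.sum_range_succ, ← ih]; push_cast; ring
  · push Not at h
    rw [hitTime_eq_top h]
    simp only [lt_top_iff_ne_top, ne_eq, ENNReal.natCast_ne_top, not_false_eq_true, if_true]
    refine (top_unique ?_).symm
    calc ⊤ = ∑' _ : ℕ, (1 : ℝ≥0∞) := (ENNReal.tsum_const_eq_top_of_ne_zero one_ne_zero).symm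
      _ ≤ ∑' k : ℕ, 2 * ((k : ℝ≥0∞) + 1) :=
        ENNReal.tsum_le_tsum fun k => one_le_two.trans (le_mul_of_one_le_right' le_add_self)

def firstHit (y : S) (s : ℕ) : Set (ℕ → S) := {ω | ω s = y ∧ ∀ t < s, ω t ≠ y}

lemma hitTime_of_mem_firstHit {y : S} {s : ℕ} {ω : ℕ → S} (h : ω ∈ firstHit y s) :
    hitTime {y} ω = s :=
  hitTime_eq_natCast h.1 h.2

lemma determinedUpTo_firstHit (y : S) (s : ℕ) : DeterminedUpTo s (firstHit y s) :=
  fun _ _ h ⟨hs, hlt⟩ => ⟨h s le_rfl ▸ hs, fun t ht => h t ht.le ▸ hlt t ht⟩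

lemma pairwise_disjoint_firstHit (y : S) : Pairwise (Function.onFun Disjoint (firstHit y)) := by
  intro s s' hne
  refine Set.disjoint_left.mpr fun ω ⟨h, hlt⟩ ⟨h', hlt'⟩ => ?_
  rcases lt_or_gt_of_ne hne with hss' | hss'
  exacts [hlt' s hss' h, hlt s' hss' h']

lemma iUnion_firstHit (y : S) : ⋃ s, firstHit y s = {ω | ∃ t, ω t = y} := by
  classical
  ext ω
  simp only [Set.mem_iUnion, Set.mem_ofPred_eq]
  refine ⟨fun ⟨s, hs, _⟩ => ⟨s, hs⟩, fun h => ⟨Nat.find h, Nat.find_spec h, ?_⟩⟩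
  exact fun t => Nat.find_min h

/-- A path moving by unit steps from below `y` can only reach `m ≥ y` after visiting `y`, so
`T_m = T_y + T_m ∘ θ_{T_y}`. -/
lemma hitTime_eq_hitTime_add_tsum {ω : ℕ → ℤ} (hω : ∀ t, (ω (t + 1) - ω t).natAbs ≤ 1)
    {y m : ℤ} (h0 : ω 0 ≤ y) (hym : y ≤ m) :
    hitTime {m} ω = hitTime {y} ω +
      ∑' s, (firstHit y s).indicator (fun ω => hitTime {m} (shift s ω)) ω := by
  have hvisit : ∀ t, ω t = m → ∃ s ≤ t, ω s = y := fun t ht =>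
    exists_eq_of_natAbs_sub_le_one hω h0 (ht ▸ hym)
  by_cases hy : ∃ t, ω t = y
  · classical
    have hmem : ω ∈ firstHit y (Nat.find hy) := ⟨Nat.find_spec hy, fun t => Nat.find_min hy⟩
    rw [tsum_eq_single (Nat.find hy) fun s hs => Set.indicator_of_notMem
        (Set.disjoint_left.mp (pairwise_disjoint_firstHit y hs.symm) hmem) _,
      Set.indicator_of_mem hmem, hitTime_of_mem_firstHit hmem]
    refine hitTime_eq_add_hitTime_shift fun t ht htm => ?_
    obtain ⟨s, hst, hs⟩ := hvisit t htm
    exact Nat.find_min hy (hst.trans_lt ht) hs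
  · push Not at hy
    rw [hitTime_eq_top (A := {y}) hy, top_add]
    exact hitTime_eq_top fun t htm =>
      let ⟨s, _, hs⟩ := hvisit t htm
      hy s hs

variable [MeasurableSpace S] [DiscreteMeasurableSpace S]

lemma measurable_hitTime (A : Set S) : Measurable (hitTime A) := by
  classical
  have h : hitTime A = fun ω => ⨅ t : ℕ, (if ω t ∈ A then (t : ℝ≥0∞) else ⊤) := by
    funext ω
    refine iInf_congr fun t => ?_
    split_ifs with h
    exacts [iInf_pos h, iInf_neg h]
  rw [h]
  exact Measurable.iInf fun t =>
    Measurable.ite (measurableSet_preimage_eval t A) measurable_const measurable_const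

lemma measurableSet_avoidUpTo (A : Set S) (k : ℕ) : MeasurableSet (avoidUpTo A k) := by
  have : avoidUpTo A k = ⋂ t ∈ Finset.range (k + 1), {ω | ω t ∈ Aᶜ} := by
    ext ω; simp [avoidUpTo]
  rw [this]
  exact Finset.measurableSet_biInter _ fun t _ => measurableSet_preimage_eval t _

lemma lintegral_hitTime (μ : Measure (ℕ → S)) (A : Set S) :
    ∫⁻ ω, hitTime A ω ∂μ = ∑' k, μ (avoidUpTo A k) := by
  simp_rw [hitTime_eq_tsum_indicator A]
  rw [lintegral_tsum fun k =>
    (measurable_const.indicator (measurableSet_avoidUpTo A k)).aemeasurable]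
  simp [lintegral_indicator (measurableSet_avoidUpTo A _)]

lemma lintegral_hitTime_sq_add_hitTime (μ : Measure (ℕ → S)) (A : Set S) :
    ∫⁻ ω, (hitTime A ω ^ 2 + hitTime A ω) ∂μ =
      ∑' k : ℕ, 2 * ((k : ℝ≥0∞) + 1) * μ (avoidUpTo A k) := by
  simp_rw [hitTime_sq_add_hitTime_eq_tsum_indicator A]
  rw [lintegral_tsum fun k =>
    (measurable_const.indicator (measurableSet_avoidUpTo A k)).aemeasurable]
  simp [lintegral_indicator (measurableSet_avoidUpTo A _)]

end HitTime

lemma ENNReal.tsum_tsum_add (f : ℕ → ℝ≥0∞) :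
    ∑' s, ∑' u, f (s + u) = ∑' k : ℕ, ((k : ℝ≥0∞) + 1) * f k := by
  rw [← ENNReal.tsum_prod (f := fun s u => f (s + u)),
    ← Finset.HasAntidiagonal.sigmaAntidiagonalEquivProd.tsum_eq, ENNReal.tsum_sigma']
  refine tsum_congr fun k => ?_
  rw [tsum_fintype]
  calc _ = ∑ _ : Finset.HasAntidiagonal.antidiagonal k, f k :=
        Finset.sum_congr rfl fun p _ => congrArg f (Finset.HasAntidiagonal.mem_antidiagonal.mp p.2)
    _ = ((k : ℝ≥0∞) + 1) * f k := by simp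

namespace BDChain

open PathSpace Set

variable {b a : ℤ} (c : BDChain b a)

lemma ae_eq_init (x : ℤ) : ∀ᵐ ω ∂c.law x, ω 0 = x := by
  have := c.prob x
  exact (prob_compl_eq_zero_iff (measurableSet_preimage_eval 0 {x})).mpr (c.init x)

lemma measure_cyl (x : ℤ) (u : ℕ → ℤ) (m : ℕ) :
    c.law x (cyl u m) = if u 0 = x then
      ∏ i ∈ Finset.range m, ENNReal.ofReal (bdStep c.p c.q (u i) (u (i + 1))) else 0 := by
  induction m with
  | zero =>
    have hcyl : cyl u 0 = {ω : ℕ → ℤ | ω 0 = u 0} := by ext ω; simp [cyl]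
    rw [hcyl, Finset.prod_range_zero]
    split_ifs with h
    · rw [h]; exact c.init x
    · exact measure_mono_null (fun ω (hω : ω 0 = u 0) (hx : ω 0 = x) => h (hω ▸ hx))
        (c.ae_eq_init x)
  | succ m ih =>
    have h := c.markov x u m
    rw [← cyl, ← cyl, ih] at h
    rw [h, Finset.prod_range_succ]
    split_ifs <;> simp

lemma map_shift_restrict_cyl (x : ℤ) (u : ℕ → ℤ) (s : ℕ) :
    ((c.law x).restrict (cyl u s)).map (shift s) = c.law x (cyl u s) • c.law (u s) := by
  have := c.prob x
  have := c.prob (u s)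
  refine ext_of_generate_finite _ generateFrom_cyl isPiSystem_cyl ?_ ?_
  · rintro _ ⟨v, m, rfl⟩
    rw [Measure.map_apply (measurable_shift s) (measurableSet_cyl v m),
      Measure.restrict_apply (measurable_shift s (measurableSet_cyl v m)),
      Measure.smul_apply, smul_eq_mul]
    by_cases h : u s = v 0
    · rw [shift_preimage_cyl_inter_cyl h, measure_cyl, measure_cyl, measure_cyl,
        glue_of_le (Nat.zero_le s), if_pos h.symm, Finset.prod_range_add]
      split_ifs
      · congr 1
        · refine Finset.prod_congr rfl fun i hi => ?_
          rw [Finset.mem_range] at hi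
          rw [glue_of_le (by omega), glue_of_le (by omega)]
        · refine Finset.prod_congr rfl fun i _ => ?_
          rw [glue_add h, add_assoc, glue_add h]
      · rw [zero_mul]
    · rw [shift_preimage_cyl_inter_cyl_of_ne h, measure_empty, measure_cyl c (u s),
        if_neg (Ne.symm h), mul_zero]
  · simp [Measure.map_apply (measurable_shift s) MeasurableSet.univ]

/-- Markov property at the fixed time `s`. -/
lemma setLIntegral_comp_shift {y x : ℤ} {s : ℕ} {X : Set (ℕ → ℤ)} (hX : DeterminedUpTo s X)
    (hend : ∀ ω ∈ X, ω s = x) {f : (ℕ → ℤ) → ℝ≥0∞} (hf : Measurable f) :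
    ∫⁻ ω in X, f (shift s ω) ∂c.law y = c.law y X * ∫⁻ ω, f ω ∂c.law x := by
  conv_lhs => rw [hX.eq_iUnion]
  conv_rhs => rw [hX.eq_iUnion, measure_iUnion pairwise_disjoint_cyl_ofFin
    fun _ => measurableSet_cyl _ _, ← ENNReal.tsum_mul_right]
  rw [lintegral_iUnion (fun _ => measurableSet_cyl _ _) pairwise_disjoint_cyl_ofFin]
  refine tsum_congr fun w => ?_
  rw [← lintegral_map hf (measurable_shift s), map_shift_restrict_cyl, lintegral_smul_measure,
    hend _ w.2, smul_eq_mul]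

lemma measure_shift_preimage_inter {y x : ℤ} {s : ℕ} {X : Set (ℕ → ℤ)}
    (hX : DeterminedUpTo s X) (hend : ∀ ω ∈ X, ω s = x) {B : Set (ℕ → ℤ)}
    (hB : MeasurableSet B) :
    c.law y (shift s ⁻¹' B ∩ X) = c.law y X * c.law x B := by
  rw [← lintegral_indicator_one hB, ← c.setLIntegral_comp_shift hX hend
    (measurable_one.indicator hB), ← Measure.restrict_apply (measurable_shift s hB),
    ← lintegral_indicator_one (measurable_shift s hB)]
  rfl

lemma mem_Icc_of_bdStep_pos {x y : ℤ} (hx : x ∈ Icc b a) (h : 0 < bdStep c.p c.q x y) :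
    y ∈ Icc b a ∧ (y - x).natAbs ≤ 1 := by
  obtain ⟨hbx, hxa⟩ := hx
  unfold bdStep at h
  split_ifs at h with h1 h2 h3
  · have : ¬ (x < b ∨ a ≤ x) := fun hor => h.ne' (c.p_zero x hor)
    exact ⟨⟨by omega, by omega⟩, by omega⟩
  · have : ¬ (x ≤ b ∨ a < x) := fun hor => h.ne' (c.q_zero x hor)
    exact ⟨⟨by omega, by omega⟩, by omega⟩
  · exact ⟨⟨by omega, by omega⟩, by omega⟩
  · exact absurd h (lt_irrefl 0)

lemma mem_Icc_of_measure_cyl_ne_zero {x : ℤ} (hx : x ∈ Icc b a) {u : ℕ → ℤ} {m : ℕ}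
    (h : c.law x (cyl u m) ≠ 0) :
    ∀ i < m, u i ∈ Icc b a ∧ (u (i + 1) - u i).natAbs ≤ 1 := by
  rw [measure_cyl, ite_ne_right_iff, Finset.prod_ne_zero_iff] at h
  obtain ⟨h0, h⟩ := h
  have hstep : ∀ i < m, 0 < bdStep c.p c.q (u i) (u (i + 1)) := fun i hi =>
    lt_of_not_ge fun hle => h i (Finset.mem_range.mpr hi) (ENNReal.ofReal_eq_zero.mpr hle)
  have hIcc : ∀ i ≤ m, u i ∈ Icc b a := by
    intro i hi
    induction i with
    | zero => exact h0 ▸ hx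
    | succ i ih => exact (c.mem_Icc_of_bdStep_pos (ih (by omega)) (hstep i (by omega))).1
  exact fun i hi => ⟨hIcc i hi.le, (c.mem_Icc_of_bdStep_pos (hIcc i hi.le) (hstep i hi)).2⟩

lemma ae_mem_Icc {x : ℤ} (hx : x ∈ Icc b a) :
    ∀ᵐ ω ∂c.law x, ∀ t, ω t ∈ Icc b a ∧ (ω (t + 1) - ω t).natAbs ≤ 1 := by
  refine ae_all_iff.mpr fun t => ae_iff.mpr ?_
  have hdet : DeterminedUpTo (t + 1)
      {ω : ℕ → ℤ | ¬ (ω t ∈ Icc b a ∧ (ω (t + 1) - ω t).natAbs ≤ 1)} :=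
    fun ω ω' h hω => by rwa [Set.mem_ofPred_eq, ← h t (by omega), ← h (t + 1) le_rfl]
  rw [hdet.eq_iUnion]
  refine measure_iUnion_null fun w => by_contra fun hne => w.2 ?_
  exact c.mem_Icc_of_measure_cyl_ne_zero hx hne t t.lt_succ_self

lemma eT_eq_eT_add_measure_mul {w y m : ℤ} (hw : w ∈ Icc b a) (hwy : w ≤ y) (hym : y ≤ m) :
    c.eT w m = c.eT w y + c.law w {ω | ∃ t, ω t = y} * c.eT y m := by
  have hF := fun s => (determinedUpTo_firstHit y s).measurableSet
  have hpath : ∀ᵐ ω ∂c.law w, hitTime {m} ω = hitTime {y} ω +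
      ∑' s, (firstHit y s).indicator (fun ω => hitTime {m} (shift s ω)) ω := by
    filter_upwards [c.ae_eq_init w, c.ae_mem_Icc hw] with ω h0 hω
    exact hitTime_eq_hitTime_add_tsum (fun t => (hω t).2) (h0 ▸ hwy) hym
  rw [eT, lintegral_congr_ae hpath, lintegral_add_left (measurable_hitTime _),
    lintegral_tsum fun s => (Measurable.indicator (f := fun ω => hitTime {m} (shift s ω))
      ((measurable_hitTime _).comp (measurable_shift s)) (hF s)).aemeasurable,
    ← iUnion_firstHit, measure_iUnion (pairwise_disjoint_firstHit y) hF,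
    ← ENNReal.tsum_mul_right]
  congr 1
  refine tsum_congr fun s => ?_
  rw [lintegral_indicator (hF s), c.setLIntegral_comp_shift (determinedUpTo_firstHit y s)
    (fun ω hω => hω.1) (measurable_hitTime _), eT]

lemma eT_le_eT_add_eT {w y m : ℤ} (hw : w ∈ Icc b a) (hwy : w ≤ y) (hym : y ≤ m) :
    c.eT w m ≤ c.eT w y + c.eT y m := by
  have := c.prob w
  rw [c.eT_eq_eT_add_measure_mul hw hwy hym]
  gcongr
  exact mul_le_of_le_one_left' prob_le_one

lemma eT_le_eT_of_le {w y m : ℤ} (hw : w ∈ Icc b a) (hwy : w ≤ y) (hym : y ≤ m) :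
    c.eT y m ≤ c.eT w m := by
  have := c.prob w
  set U : Set (ℕ → ℤ) := {ω | ∃ t, ω t = y}
  have hU : MeasurableSet U := by
    rw [show U = ⋃ s, firstHit y s from (iUnion_firstHit y).symm]
    exact MeasurableSet.iUnion fun s => (determinedUpTo_firstHit y s).measurableSet
  have hnever : c.law w Uᶜ * ⊤ ≤ c.eT w y := by
    rw [mul_comm, ← setLIntegral_const]
    calc ∫⁻ _ in Uᶜ, ⊤ ∂c.law w = ∫⁻ ω in Uᶜ, hitTime {y} ω ∂c.law w :=
          setLIntegral_congr_fun hU.compl fun ω hω =>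
            (hitTime_eq_top fun t ht => hω ⟨t, ht⟩).symm
      _ ≤ c.eT w y := setLIntegral_le_lintegral _ _
  calc c.eT y m = (c.law w U + c.law w Uᶜ) * c.eT y m := by
        rw [measure_add_measure_compl hU, measure_univ, one_mul]
    _ ≤ c.law w U * c.eT y m + c.law w Uᶜ * ⊤ := by rw [add_mul]; gcongr; exact le_top
    _ ≤ c.eT w y + c.law w U * c.eT y m := by rw [add_comm]; gcongr
    _ = c.eT w m := (c.eT_eq_eT_add_measure_mul hw hwy hym).symm

lemma eT_le_eT_add_eT_of_mem_Icc {j n x : ℤ} (hj : b ≤ j) (hjn : j ≤ n) (hn : n ≤ a)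
    (hx : x ∈ Icc b n) : c.eT x n ≤ c.eT b j + c.eT j n := by
  rcases le_or_gt j x with hjx | hxj
  · exact (c.eT_le_eT_of_le ⟨hj, hjn.trans hn⟩ hjx hx.2).trans le_add_self
  · calc c.eT x n ≤ c.eT x j + c.eT j n :=
          c.eT_le_eT_add_eT ⟨hx.1, hx.2.trans hn⟩ hxj.le hjn
      _ ≤ c.eT b j + c.eT j n := by
          gcongr
          exact c.eT_le_eT_of_le ⟨le_rfl, hj.trans (hjn.trans hn)⟩ hx.1 hxj.le

lemma measure_avoidUpTo_add (y : ℤ) (A : Set ℤ) (s u : ℕ) :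
    c.law y (avoidUpTo A (s + u)) =
      ∑' x, c.law y (avoidUpTo A s ∩ {ω | ω s = x}) * c.law x (avoidUpTo A u) := by
  have hsplit : avoidUpTo A (s + u) =
      ⋃ x, shift s ⁻¹' avoidUpTo A u ∩ (avoidUpTo A s ∩ {ω | ω s = x}) := by
    ext ω
    simp only [avoidUpTo, mem_iUnion, mem_inter_iff, mem_preimage, mem_ofPred_eq, shift]
    refine ⟨fun h => ⟨ω s, fun t ht => h _ (by omega), fun t ht => h t (by omega), rfl⟩, ?_⟩
    rintro ⟨x, hu, hs, -⟩ t ht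
    by_cases hts : t ≤ s
    · exact hs t hts
    · obtain ⟨t, rfl⟩ := Nat.exists_eq_add_of_le (le_of_not_ge hts)
      exact hu t (by omega)
  have hdet : ∀ x, DeterminedUpTo s (avoidUpTo A s ∩ {ω | ω s = x}) := fun x ω ω' h hω =>
    ⟨determinedUpTo_avoidUpTo A s ω ω' h hω.1, (h s le_rfl).symm.trans hω.2⟩
  rw [hsplit, measure_iUnion]
  · exact tsum_congr fun x => c.measure_shift_preimage_inter (hdet x) (fun ω hω => hω.2)
      (measurableSet_avoidUpTo A u)
  · exact fun x x' hne => Disjoint.mono inter_subset_right inter_subset_right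
      (disjoint_left.mpr fun ω hx hx' => hne (hx.2.symm.trans hx'.2))
  · exact fun x => (measurable_shift s (measurableSet_avoidUpTo A u)).inter (hdet x).measurableSet

lemma measure_avoidUpTo_inter_eq_zero {j n x : ℤ} (hj : j ∈ Icc b a) (hjn : j ≤ n)
    (hx : x ∉ Ico b n) (s : ℕ) : c.law j (avoidUpTo {n} s ∩ {ω | ω s = x}) = 0 := by
  refine measure_eq_zero_iff_ae_notMem.mpr ?_
  filter_upwards [c.ae_eq_init j, c.ae_mem_Icc hj] with ω h0 hω ⟨havoid, hs⟩
  have hxb : b ≤ x := hs ▸ (hω s).1.1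
  obtain ⟨t, hts, ht⟩ := exists_eq_of_natAbs_sub_le_one (fun t => (hω t).2) (h0 ▸ hjn)
    (show n ≤ ω s from hs ▸ not_lt.mp fun hxn => hx ⟨hxb, hxn⟩)
  exact havoid t hts ht

lemma tsum_measure_avoidUpTo_add_le {j n : ℤ} (hj : j ∈ Icc b a) (hjn : j ≤ n) {K : ℝ≥0∞}
    (hK : ∀ x ∈ Ico b n, c.eT x n ≤ K) (s : ℕ) :
    ∑' u, c.law j (avoidUpTo {n} (s + u)) ≤ K * c.law j (avoidUpTo {n} s) := by
  have := c.prob j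
  calc ∑' u, c.law j (avoidUpTo {n} (s + u))
      = ∑' x, c.law j (avoidUpTo {n} s ∩ {ω | ω s = x}) * c.eT x n := by
        simp_rw [c.measure_avoidUpTo_add, eT, lintegral_hitTime]
        rw [ENNReal.tsum_comm]
        simp_rw [ENNReal.tsum_mul_left]
    _ ≤ ∑' x, c.law j (avoidUpTo {n} s ∩ {ω | ω s = x}) * K := by
        refine ENNReal.tsum_le_tsum fun x => ?_
        by_cases hx : x ∈ Ico b n
        · gcongr; exact hK x hx
        · simp [c.measure_avoidUpTo_inter_eq_zero hj hjn hx s]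
    _ = K * c.law j (avoidUpTo {n} s) := by
        rw [ENNReal.tsum_mul_right, mul_comm, ← measure_iUnion, ← inter_iUnion]
        · rw [iUnion_eq_univ_iff.mpr fun ω => ⟨ω s, rfl⟩, inter_univ]
        · exact fun x x' hne => Disjoint.mono inter_subset_right inter_subset_right
            (disjoint_left.mpr fun ω hx hx' => hne (hx.symm.trans hx'))
        · exact fun x => (measurableSet_avoidUpTo _ s).inter (measurableSet_preimage_eval s {x})

end BDChain

theorem second_moment_bound_general {b a : ℤ} (c : BDChain b a)
    (j n : ℤ) (hj : b ≤ j) (hjn : j < n) (hn : n ≤ a) :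
    c.eT2 j n + c.eT j n ≤ 2 * (c.eT j n) ^ 2 + 2 * c.eT b j * c.eT j n := by
  set K := c.eT b j + c.eT j n
  have hK : ∀ x ∈ Set.Ico b n, c.eT x n ≤ K := fun x hx =>
    c.eT_le_eT_add_eT_of_mem_Icc hj hjn.le hn ⟨hx.1, hx.2.le⟩
  calc c.eT2 j n + c.eT j n = ∫⁻ ω, (hitTime {n} ω ^ 2 + hitTime {n} ω) ∂c.law j := by
        rw [BDChain.eT2, BDChain.eT, lintegral_add_left ((measurable_hitTime _).pow_const 2)]
    _ = 2 * ∑' s, ∑' u, c.law j (avoidUpTo {n} (s + u)) := by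
        simp_rw [lintegral_hitTime_sq_add_hitTime, mul_assoc]
        rw [ENNReal.tsum_mul_left, ← ENNReal.tsum_tsum_add]
    _ ≤ 2 * ∑' s, K * c.law j (avoidUpTo {n} s) := by
        gcongr with s
        exact c.tsum_measure_avoidUpTo_add_le ⟨hj, hjn.le.trans hn⟩ hjn.le hK s
    _ = 2 * (c.eT j n) ^ 2 + 2 * c.eT b j * c.eT j n := by
        rw [ENNReal.tsum_mul_left, ← lintegral_hitTime, ← BDChain.eT]
        ring

/-- For an irreducible birth-and-death chain on `⟦b,a⟧` with
reversible invariant probability measure `π`, for all `b ≤ j < n ≤ a`: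
`E[T_{j→n}²] ≤ 2 E[T_{j→n}]² + 2 E[T_{b→j}] E[T_{j→n}] − E[T_{j→n}]`
(stated with the subtracted mean moved to the left-hand side, an equivalent form
avoiding subtraction in `ℝ≥0∞`). -/
theorem second_moment_bound {b a : ℤ} (hab : b < a) (c : BDChain b a)
    (π : ℤ → ℝ) (hπ : c.IsStationary π)
    (j n : ℤ) (hj : b ≤ j) (hjn : j < n) (hn : n ≤ a) :
    c.eT2 j n + c.eT j n ≤ 2 * (c.eT j n) ^ 2 + 2 * c.eT b j * c.eT j n :=
  second_moment_bound_general c j n hj hjn hn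
end
end

section
/- Let X be an irreducible birth-and-death chain on ⟦b,a⟧ (b ≤ 0 < a) with transition probabilities p_x, q_x and invariant measure π, and let X̂ be its right half-well version. Then E[T_{0→a}] = ( π(⟦b,−1⟧)·E[T̂_{a→0}] + E[T̂_{0→a}] ) / π(⟦0,a⟧), and in particular E[T_{0→a}] ≥ E[T̂_{0→a}]. Symmetrically, with X̌ the left half-well version, E[T_{0→b}] = ( π(⟦1,a⟧)·E[Ť_{b→0}] + E[Ť_{0→b}] ) / π(⟦b,0⟧) ≥ E[Ť_{0→b}]. -/
open MeasureTheory Filter Topology ENNReal ProbabilityTheory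

noncomputable section

/-! Crossing the edge `k → k + 1` of a birth-and-death chain on `⟦b,a⟧` with reversible measure
`π` takes on average `π⟦b,k⟧ / (π k p k)` steps upwards and `π⟦k+1,a⟧ / (π k p k)` steps
downwards. Upwards the sum is the unique finite solution of the Poisson equation `h = 1 + K h` off
the target: the mass `∑ z, P_x(X_n = z, T > n) h z` of the killed chain decreases by exactly
`P_x(T > n)` at each step, so `h x = E_x[T]`. Downwards it follows by reflecting `x ↦ -x`.

The right half-well chain has the same edge weights `π k p k` on `⟦0,a⟧`, and `π` restricted to
`⟦0,a⟧` is reversible for it, so `E[T_{0→a}]`, `E[T̂_{0→a}]` and `E[T̂_{a→0}]` are sums over the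
same edges, and the identity reduces edge by edge to
`π⟦0,a⟧ π⟦b,k⟧ = π⟦b,-1⟧ π⟦k+1,a⟧ + π⟦0,k⟧`, a consequence of `π⟦b,-1⟧ + π⟦0,a⟧ = 1`.
The left half-well statement is the right one for the reflected chain. -/

open Finset

lemma sum_Icc_neg {M : Type*} [AddCommMonoid M] (f : ℤ → M) (l u : ℤ) :
    ∑ i ∈ Icc l u, f (-i) = ∑ i ∈ Icc (-u) (-l), f i :=
  sum_nbij' (fun i => -i) (fun i => -i) (fun i hi => by simp only [mem_Icc] at hi ⊢; omega)
    (fun i hi => by simp only [mem_Icc] at hi ⊢; omega) (fun i _ => neg_neg i)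
    (fun i _ => neg_neg i) (fun _ _ => rfl)

lemma sum_Icc_add_sum_Icc {M : Type*} [AddCommMonoid M] (f : ℤ → M) {l m u : ℤ}
    (h₁ : l ≤ m + 1) (h₂ : m ≤ u) :
    ∑ i ∈ Icc l m, f i + ∑ i ∈ Icc (m + 1) u, f i = ∑ i ∈ Icc l u, f i := by
  rw [← sum_union (disjoint_left.2 fun i hi hi' => by simp only [mem_Icc] at hi hi'; omega)]
  congr 1
  ext i
  simp only [mem_union, mem_Icc]
  omega

lemma mass_mul_sum_div_eq (π d : ℤ → ℝ) {b a : ℤ} (hb : b ≤ 0) (hπ : ∑ i ∈ Icc b a, π i = 1) :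
    (∑ i ∈ Icc 0 a, π i) * ∑ k ∈ Ico 0 a, (∑ j ∈ Icc b k, π j) / d k
      = (∑ i ∈ Icc b (-1), π i) * ∑ k ∈ Ico 0 a, (∑ j ∈ Icc (k + 1) a, π j) / d k
        + ∑ k ∈ Ico 0 a, (∑ j ∈ Icc 0 k, π j) / d k := by
  rw [mul_sum, mul_sum, ← sum_add_distrib]
  refine sum_congr rfl fun k hk => ?_
  simp only [mem_Ico] at hk
  have h₁ := sum_Icc_add_sum_Icc π (l := b) (m := -1) (u := a) (by omega) (by omega)
  have h₂ := sum_Icc_add_sum_Icc π (l := b) (m := -1) (u := k) (by omega) (by omega)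
  have h₃ := sum_Icc_add_sum_Icc π (l := 0) (m := k) (u := a) (by omega) (by omega)
  norm_num only at h₁ h₂
  rw [mul_div_assoc', mul_div_assoc', ← add_div]
  congr 1
  linear_combination -(∑ i ∈ Icc 0 a, π i) * h₂ - (∑ i ∈ Icc b (-1), π i) * h₃
    + (∑ i ∈ Icc 0 k, π i) * (h₁.trans hπ)

lemma hitTime_eq_tsum_indicator_s17 {S : Type*} (A : Set S) (ω : ℕ → S) :
    hitTime A ω = ∑' n, {ω : ℕ → S | ∀ i ≤ n, ω i ∉ A}.indicator 1 ω := by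
  classical
  by_cases h : ∃ t, ω t ∈ A
  · have hT : hitTime A ω = Nat.find h := by
      refine le_antisymm ?_ (le_iInf₂ fun t ht => Nat.cast_le.2 (Nat.find_min' h ht))
      exact iInf₂_le (f := fun t (_ : ω t ∈ A) => (t : ℝ≥0∞)) _ (Nat.find_spec h)
    rw [hT, tsum_eq_sum (s := range (Nat.find h))]
    · rw [sum_congr rfl fun n hn => Set.indicator_of_mem
        (show ω ∈ {ω : ℕ → S | ∀ i ≤ n, ω i ∉ A} from (Nat.lt_find_iff h n).1 (mem_range.1 hn)) _]
      simp
    · exact fun n hn => Set.indicator_of_notMem (fun (hmem : ∀ i ≤ n, ω i ∉ A) =>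
        hn (mem_range.2 ((Nat.lt_find_iff h n).2 hmem))) _
  · simp only [not_exists] at h
    simp [hitTime, h]

def pathPrefix (n : ℕ) (ω : ℕ → ℤ) : Fin (n + 1) → ℤ := fun i => ω i

lemma measurable_pathPrefix (n : ℕ) : Measurable (pathPrefix n) :=
  measurable_pi_lambda _ fun i => measurable_pi_apply (i : ℕ)

lemma measurableSet_preimage_pathPrefix (n : ℕ) (P : Set (Fin (n + 1) → ℤ)) :
    MeasurableSet (pathPrefix n ⁻¹' P) :=
  measurable_pathPrefix n P.to_countable.measurableSet

lemma measurableSet_eval_eq (n : ℕ) (z : ℤ) : MeasurableSet {ω : ℕ → ℤ | ω n = z} :=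
  measurableSet_eq_fun (measurable_pi_apply n) measurable_const

lemma preimage_pathPrefix_singleton (n : ℕ) (u : ℕ → ℤ) :
    pathPrefix n ⁻¹' {pathPrefix n u} = {ω | ∀ i ≤ n, ω i = u i} := by
  ext ω
  simp only [Set.mem_preimage, Set.mem_singleton_iff, Set.mem_ofPred_eq, funext_iff, pathPrefix,
    Fin.forall_iff, Nat.lt_succ_iff]

lemma setOf_forall_le_ne_eq_preimage (n : ℕ) (y : ℤ) :
    {ω : ℕ → ℤ | ∀ i ≤ n, ω i ≠ y} = pathPrefix n ⁻¹' {v | ∀ i, v i ≠ y} := by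
  ext ω
  simp [pathPrefix, Fin.forall_iff]

namespace BDChain

variable {b a : ℤ} (c : BDChain b a)

def kernel (x y : ℤ) : ℝ≥0∞ := ENNReal.ofReal (bdStep c.p c.q x y)

lemma p_nonneg (x : ℤ) : 0 ≤ c.p x := by
  by_cases h : b ≤ x ∧ x ≤ a - 1
  · exact (c.p_pos x h.1 h.2).le
  · exact (c.p_zero x (by omega)).ge

lemma q_nonneg (x : ℤ) : 0 ≤ c.q x := by
  by_cases h : b + 1 ≤ x ∧ x ≤ a
  · exact (c.q_pos x h.1 h.2).le
  · exact (c.q_zero x (by omega)).ge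

lemma hold_nonneg (x : ℤ) : 0 ≤ 1 - c.p x - c.q x := by
  by_cases h : b ≤ x ∧ x ≤ a
  · linarith [c.r_nonneg x h.1 h.2]
  · linarith [c.p_zero x (by omega), c.q_zero x (by omega)]

lemma kernel_succ (x : ℤ) : c.kernel x (x + 1) = ENNReal.ofReal (c.p x) := by
  simp [kernel, bdStep]

lemma kernel_pred (x : ℤ) : c.kernel x (x - 1) = ENNReal.ofReal (c.q x) := by
  rw [kernel, bdStep, if_neg (by omega), if_pos rfl]

lemma kernel_self (x : ℤ) : c.kernel x x = ENNReal.ofReal (1 - c.p x - c.q x) := by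
  rw [kernel, bdStep, if_neg (by omega), if_neg (by omega), if_pos rfl]

lemma kernel_eq_zero {x y : ℤ} (h₁ : y ≠ x + 1) (h₂ : y ≠ x - 1) (h₃ : y ≠ x) :
    c.kernel x y = 0 := by
  rw [kernel, bdStep, if_neg h₁, if_neg h₂, if_neg h₃, ENNReal.ofReal_zero]

lemma tsum_kernel_mul (x : ℤ) (g : ℤ → ℝ≥0∞) :
    ∑' y, c.kernel x y * g y
      = c.kernel x (x + 1) * g (x + 1) + c.kernel x (x - 1) * g (x - 1) + c.kernel x x * g x := by
  rw [tsum_eq_sum (s := {x + 1, x - 1, x}),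
    sum_insert (by simp only [mem_insert, mem_singleton]; omega),
    sum_insert (by simp only [mem_singleton]; omega), sum_singleton, add_assoc]
  intro y hy
  simp only [mem_insert, mem_singleton, not_or] at hy
  rw [c.kernel_eq_zero hy.1 hy.2.1 hy.2.2, zero_mul]

lemma kernel_eq_zero_of_mem_of_notMem {x y : ℤ} (hx : x ∈ Icc b a) (hy : y ∉ Icc b a) :
    c.kernel x y = 0 := by
  simp only [mem_Icc] at hx hy
  by_cases h₁ : y = x + 1
  · rw [h₁, kernel_succ, c.p_zero x (by omega), ENNReal.ofReal_zero]
  by_cases h₂ : y = x - 1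
  · rw [h₂, kernel_pred, c.q_zero x (by omega), ENNReal.ofReal_zero]
  exact c.kernel_eq_zero h₁ h₂ (by omega)

lemma law_preimage_pathPrefix_inter (x : ℤ) (n : ℕ) (P : Set (Fin (n + 1) → ℤ))
    {B : Set (ℕ → ℤ)} (hB : MeasurableSet B) :
    c.law x (pathPrefix n ⁻¹' P ∩ B)
      = ∑' v, P.indicator (fun v => c.law x (pathPrefix n ⁻¹' {v} ∩ B)) v := by
  rw [← _root_.tsum_subtype, ← measure_iUnion]
  · congr 1
    ext ω
    simp
  · intro v w hvw
    exact ((Set.disjoint_singleton.2 (Subtype.coe_ne_coe.2 hvw)).preimage _).mono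
      Set.inter_subset_left Set.inter_subset_left
  · exact fun v => (measurableSet_preimage_pathPrefix n _).inter hB

lemma law_cylinder_inter_eval_succ (x : ℤ) (n : ℕ) (v : Fin (n + 1) → ℤ) (w : ℤ) :
    c.law x (pathPrefix n ⁻¹' {v} ∩ {ω | ω (n + 1) = w})
      = c.law x (pathPrefix n ⁻¹' {v}) * c.kernel (v (Fin.last n)) w := by
  set u : ℕ → ℤ := fun i => if h : i < n + 1 then v ⟨i, h⟩ else w
  have hv : pathPrefix n u = v := funext fun i => dif_pos i.isLt
  have hset : pathPrefix n ⁻¹' {v} ∩ {ω | ω (n + 1) = w} = {ω | ∀ i ≤ n + 1, ω i = u i} := by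
    rw [← hv, preimage_pathPrefix_singleton]
    ext ω
    simp only [Set.mem_inter_iff, Set.mem_ofPred_eq, Nat.le_succ_iff_eq_or_le]
    constructor
    · rintro ⟨h, hw⟩ i (rfl | hi)
      · simpa [u] using hw
      · exact h i hi
    · intro h
      exact ⟨fun i hi => h i (Or.inr hi), by simpa [u] using h (n + 1) (Or.inl rfl)⟩
  rw [hset, c.markov, ← preimage_pathPrefix_singleton, hv]
  simp [kernel, u, Fin.last]

theorem law_preimage_pathPrefix_inter_eval_succ (x : ℤ) (n : ℕ) (P : Set (Fin (n + 1) → ℤ))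
    (w : ℤ) :
    c.law x (pathPrefix n ⁻¹' P ∩ {ω | ω (n + 1) = w})
      = ∑' z, c.law x (pathPrefix n ⁻¹' P ∩ {ω | ω n = z}) * c.kernel z w := by
  have hfiber (v : Fin (n + 1) → ℤ) (z : ℤ) :
      c.law x (pathPrefix n ⁻¹' {v} ∩ {ω | ω n = z})
        = if z = v (Fin.last n) then c.law x (pathPrefix n ⁻¹' {v}) else 0 := by
    split_ifs with h
    · congr 1
      refine Set.inter_eq_left.2 fun ω hω => ?_
      simp only [Set.mem_preimage, Set.mem_singleton_iff] at hω
      exact h ▸ congrFun hω (Fin.last n)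
    · refine measure_mono_null (fun ω hω => ?_) measure_empty
      obtain ⟨hω, hz⟩ := hω
      simp only [Set.mem_preimage, Set.mem_singleton_iff] at hω
      exact h ((show ω n = z from hz).symm.trans (congrFun hω (Fin.last n)))
  simp_rw [law_preimage_pathPrefix_inter c x n P (measurableSet_eval_eq _ _), hfiber,
    law_cylinder_inter_eval_succ, ← ENNReal.tsum_mul_right]
  rw [ENNReal.tsum_comm]
  refine tsum_congr fun v => ?_
  by_cases hv : v ∈ P <;> simp [hv]

lemma law_eval_zero_eq_zero_of_ne {x z : ℤ} (hzx : z ≠ x) : c.law x {ω | ω 0 = z} = 0 := by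
  have := c.prob x
  have hcompl : c.law x {ω | ω 0 = x}ᶜ = 0 :=
    (prob_compl_eq_zero_iff (measurableSet_eval_eq 0 x)).2 (c.init x)
  exact measure_mono_null (fun ω (hω : ω 0 = z) (h : ω 0 = x) => hzx (hω ▸ h)) hcompl

def killedLaw (x y : ℤ) (n : ℕ) (z : ℤ) : ℝ≥0∞ :=
  c.law x ({ω | ∀ i ≤ n, ω i ≠ y} ∩ {ω | ω n = z})

lemma killedLaw_zero_of_ne {x z : ℤ} (y : ℤ) (hzx : z ≠ x) : c.killedLaw x y 0 z = 0 :=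
  measure_mono_null Set.inter_subset_right (c.law_eval_zero_eq_zero_of_ne hzx)

lemma killedLaw_zero_self {x y : ℤ} (hxy : x ≠ y) : c.killedLaw x y 0 x = 1 := by
  have hset : {ω : ℕ → ℤ | ∀ i ≤ 0, ω i ≠ y} ∩ {ω | ω 0 = x} = {ω | ω 0 = x} :=
    Set.inter_eq_right.2 fun ω (hω : ω 0 = x) i hi => by rwa [Nat.le_zero.1 hi, hω]
  rw [killedLaw, hset, c.init]

lemma killedLaw_target (x y : ℤ) (n : ℕ) : c.killedLaw x y n y = 0 :=
  measure_mono_null (fun _ ⟨h, hω⟩ => h n le_rfl hω) measure_empty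

lemma killedLaw_succ (x y : ℤ) (n : ℕ) (w : ℤ) :
    c.killedLaw x y (n + 1) w = if w = y then 0 else ∑' z, c.killedLaw x y n z * c.kernel z w := by
  split_ifs with hwy
  · exact measure_mono_null (fun ω ⟨hω, hw⟩ => hω (n + 1) le_rfl (hw.trans hwy)) measure_empty
  have hset : {ω : ℕ → ℤ | ∀ i ≤ n + 1, ω i ≠ y} ∩ {ω | ω (n + 1) = w}
      = {ω | ∀ i ≤ n, ω i ≠ y} ∩ {ω | ω (n + 1) = w} := by
    ext ω
    simp only [Set.mem_inter_iff, Set.mem_ofPred_eq, Nat.le_succ_iff_eq_or_le]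
    constructor
    · exact fun ⟨h, hw⟩ => ⟨fun i hi => h i (Or.inr hi), hw⟩
    · rintro ⟨h, hw⟩
      exact ⟨fun i hi => hi.elim (fun hi => hi ▸ hw ▸ hwy) (h i), hw⟩
  simp only [killedLaw]
  rw [hset]
  simp only [setOf_forall_le_ne_eq_preimage]
  exact c.law_preimage_pathPrefix_inter_eval_succ x n _ w

lemma killedLaw_eq_zero_of_notMem {x z : ℤ} (y : ℤ) (hx : x ∈ Icc b a) (hz : z ∉ Icc b a)
    (n : ℕ) : c.killedLaw x y n z = 0 := by
  induction n generalizing z with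
  | zero => exact c.killedLaw_zero_of_ne y (by rintro rfl; exact hz hx)
  | succ n ih =>
    rw [killedLaw_succ]
    split_ifs
    · rfl
    refine ENNReal.tsum_eq_zero.2 fun w => ?_
    by_cases hw : w ∈ Icc b a
    · rw [c.kernel_eq_zero_of_mem_of_notMem hw hz, mul_zero]
    · rw [ih hw, zero_mul]

lemma tsum_killedLaw (x y : ℤ) (n : ℕ) :
    ∑' z, c.killedLaw x y n z = c.law x {ω | ∀ i ≤ n, ω i ≠ y} := by
  simp only [killedLaw]
  rw [← measure_iUnion, ← Set.inter_iUnion,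
    Set.iUnion_eq_univ_iff.2 fun ω => ⟨ω n, rfl⟩, Set.inter_univ]
  · exact fun z w hzw => (Set.disjoint_iff.2 fun ω ⟨⟨_, hz⟩, ⟨_, hw⟩⟩ => hzw (hz.symm.trans hw))
  · intro z
    rw [setOf_forall_le_ne_eq_preimage]
    exact (measurableSet_preimage_pathPrefix n _).inter (measurableSet_eval_eq n z)

lemma eT_eq_tsum_law (x y : ℤ) : c.eT x y = ∑' n, c.law x {ω | ∀ i ≤ n, ω i ≠ y} := by
  have hmeas (n : ℕ) : MeasurableSet {ω : ℕ → ℤ | ∀ i ≤ n, ω i ≠ y} := by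
    rw [setOf_forall_le_ne_eq_preimage]
    exact measurableSet_preimage_pathPrefix n _
  simp_rw [eT, hitTime_eq_tsum_indicator_s17, Set.mem_singleton_iff]
  rw [lintegral_tsum fun n => (measurable_one.indicator (hmeas n)).aemeasurable]
  simp_rw [lintegral_indicator_one (hmeas _)]

lemma tsum_killedLaw_zero_mul {x y : ℤ} {g : ℤ → ℝ≥0∞} (hgy : g y = 0) :
    ∑' z, c.killedLaw x y 0 z * g z = g x := by
  rw [tsum_eq_single x fun z hzx => by rw [c.killedLaw_zero_of_ne y hzx, zero_mul]]
  by_cases hxy : x = y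
  · rw [hxy, hgy, mul_zero]
  · rw [c.killedLaw_zero_self hxy, one_mul]

lemma tsum_killedLaw_mul_eq_add {x y : ℤ} {g : ℤ → ℝ≥0∞} (hgy : g y = 0)
    (hg : ∀ z ∈ Icc b a, z ≠ y → g z = 1 + ∑' w, c.kernel z w * g w) (hx : x ∈ Icc b a)
    (n : ℕ) :
    ∑' z, c.killedLaw x y n z * g z
      = c.law x {ω | ∀ i ≤ n, ω i ≠ y} + ∑' z, c.killedLaw x y (n + 1) z * g z := by
  have hcur (z : ℤ) : c.killedLaw x y n z * g z
      = c.killedLaw x y n z + ∑' w, c.killedLaw x y n z * c.kernel z w * g w := by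
    by_cases hz : z ∈ Icc b a
    · by_cases hzy : z = y
      · simp [hzy, killedLaw_target]
      · simp_rw [hg z hz hzy, mul_add, mul_one, mul_assoc, ENNReal.tsum_mul_left]
    · simp [c.killedLaw_eq_zero_of_notMem y hx hz]
  have hnext (w : ℤ) :
      c.killedLaw x y (n + 1) w * g w = ∑' z, c.killedLaw x y n z * c.kernel z w * g w := by
    rw [killedLaw_succ, ENNReal.tsum_mul_right]
    split_ifs with hwy
    · rw [hwy, hgy, mul_zero, mul_zero]
    · rfl
  rw [tsum_congr hcur, ENNReal.tsum_add, tsum_killedLaw, ENNReal.tsum_comm, tsum_congr hnext]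

theorem eT_eq_of_poisson {y : ℤ} (g : ℤ → ℝ≥0∞) (hgy : g y = 0)
    (hg_ne_top : ∀ z ∈ Icc b a, g z ≠ ⊤)
    (hg : ∀ z ∈ Icc b a, z ≠ y → g z = 1 + ∑' w, c.kernel z w * g w)
    {x : ℤ} (hx : x ∈ Icc b a) : c.eT x y = g x := by
  set s : ℕ → ℝ≥0∞ := fun n => c.law x {ω | ∀ i ≤ n, ω i ≠ y}
  set R : ℕ → ℝ≥0∞ := fun n => ∑' z, c.killedLaw x y n z * g z
  have hpartial (N : ℕ) : g x = ∑ n ∈ range N, s n + R N := by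
    induction N with
    | zero => simp [R, c.tsum_killedLaw_zero_mul hgy]
    | succ N ih =>
      rw [ih, sum_range_succ, add_assoc]
      exact congrArg _ (c.tsum_killedLaw_mul_eq_add hgy hg hx N)
  have hs_summable : ∑' n, s n ≠ ⊤ :=
    ne_top_of_le_ne_top (hg_ne_top x hx)
      (ENNReal.tsum_le_of_sum_range_le fun N => (hpartial N).symm ▸ le_self_add)
  have hR_bound (N : ℕ) : R N ≤ s N * ∑ z ∈ Icc b a, g z := by
    simp only [R, s]
    rw [← tsum_killedLaw, ← ENNReal.tsum_mul_right]
    refine ENNReal.tsum_le_tsum fun z => ?_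
    by_cases hz : z ∈ Icc b a
    · exact mul_le_mul_right (single_le_sum (fun _ _ => zero_le) hz) _
    · simp [c.killedLaw_eq_zero_of_notMem y hx hz]
  have hR : Tendsto R atTop (𝓝 0) := by
    have := ENNReal.Tendsto.mul_const (ENNReal.tendsto_atTop_zero_of_tsum_ne_top hs_summable)
      (Or.inr (ENNReal.sum_ne_top.2 hg_ne_top))
    rw [zero_mul] at this
    exact tendsto_of_tendsto_of_tendsto_of_le_of_le tendsto_const_nhds this (fun _ => zero_le)
      hR_bound
  have hlim := (ENNReal.tendsto_nat_tsum s).add hR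
  rw [add_zero, ← eT_eq_tsum_law] at hlim
  exact tendsto_nhds_unique hlim (by simp_rw [← hpartial]; exact tendsto_const_nhds)

lemma ofReal_eq_one_add_tsum_kernel_mul {G : ℤ → ℝ} {z : ℤ} (hG : ∀ w, 0 ≤ G w)
    (h : G z = 1 + (c.p z * G (z + 1) + c.q z * G (z - 1) + (1 - c.p z - c.q z) * G z)) :
    ENNReal.ofReal (G z) = 1 + ∑' w, c.kernel z w * ENNReal.ofReal (G w) := by
  have hp := mul_nonneg (c.p_nonneg z) (hG (z + 1))
  have hq := mul_nonneg (c.q_nonneg z) (hG (z - 1))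
  have hr := mul_nonneg (c.hold_nonneg z) (hG z)
  rw [tsum_kernel_mul, kernel_succ, kernel_pred, kernel_self, ← ENNReal.ofReal_mul (c.p_nonneg z),
    ← ENNReal.ofReal_mul (c.q_nonneg z), ← ENNReal.ofReal_mul (c.hold_nonneg z),
    ← ENNReal.ofReal_add hp hq, ← ENNReal.ofReal_add (add_nonneg hp hq) hr, ← ENNReal.ofReal_one,
    ← ENNReal.ofReal_add zero_le_one (by positivity)]
  exact congrArg _ h

def IsReversible (π : ℤ → ℝ) : Prop :=
  (∀ x, b ≤ x → x ≤ a → 0 < π x) ∧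
    ∀ x, b + 1 ≤ x → x ≤ a → π x * c.q x = π (x - 1) * c.p (x - 1)

lemma IsStationary.isReversible {π : ℤ → ℝ} (h : c.IsStationary π) : c.IsReversible π :=
  ⟨h.1, h.2.2.2⟩

def rightPassageSum (π : ℤ → ℝ) (z : ℤ) : ℝ :=
  ∑ k ∈ Ico z a, (∑ j ∈ Icc b k, π j) / (π k * c.p k)

lemma rightPassageSum_eq_add (π : ℤ → ℝ) {x : ℤ} (hx : x < a) :
    c.rightPassageSum π x = (∑ j ∈ Icc b x, π j) / (π x * c.p x) + c.rightPassageSum π (x + 1) := by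
  rw [rightPassageSum, ← insert_Ico_add_one_left_eq_Ico hx, sum_insert (by simp)]
  rfl

variable {c}

lemma IsReversible.rightPassageSum_nonneg {π : ℤ → ℝ} (hπ : c.IsReversible π) (z : ℤ) :
    0 ≤ c.rightPassageSum π z := by
  refine sum_nonneg fun k hk => ?_
  by_cases hbk : b ≤ k
  · have hka : k < a := (mem_Ico.1 hk).2
    refine div_nonneg (sum_nonneg fun j hj => (hπ.1 j (mem_Icc.1 hj).1 ?_).le)
      (mul_nonneg (hπ.1 k hbk hka.le).le (c.p_nonneg k))
    have := (mem_Icc.1 hj).2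
    omega
  · rw [Icc_eq_empty hbk, sum_empty, zero_div]

lemma IsReversible.rightPassageSum_recurrence {π : ℤ → ℝ} (hπ : c.IsReversible π) {x : ℤ}
    (hbx : b ≤ x) (hxa : x < a) :
    c.p x * (c.rightPassageSum π x - c.rightPassageSum π (x + 1))
      = 1 + c.q x * (c.rightPassageSum π (x - 1) - c.rightPassageSum π x) := by
  have hπx := hπ.1 x hbx hxa.le
  have hup : c.p x * (c.rightPassageSum π x - c.rightPassageSum π (x + 1))
      = (∑ j ∈ Icc b x, π j) / π x := by
    have := c.p_pos x hbx (by omega)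
    rw [c.rightPassageSum_eq_add π hxa]
    field_simp
    ring
  have hdown : c.q x * (c.rightPassageSum π (x - 1) - c.rightPassageSum π x)
      = (∑ j ∈ Icc b (x - 1), π j) / π x := by
    rcases hbx.eq_or_lt with rfl | hbx
    · rw [c.q_zero _ (Or.inl le_rfl), Icc_eq_empty (by omega), sum_empty]
      ring
    · have hdb := hπ.2 x (by omega) hxa.le
      have := hπ.1 (x - 1) (by omega) (by omega)
      have := c.p_pos (x - 1) (by omega) (by omega)
      rw [c.rightPassageSum_eq_add π (x := x - 1) (by omega), sub_add_cancel]
      field_simp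
      linear_combination (∑ j ∈ Icc b (x - 1), π j) * hdb
  rw [hup, hdown, ← insert_Icc_sub_one_right_eq_Icc hbx, sum_insert (by simp)]
  field_simp

theorem IsReversible.eT_to_right_end {π : ℤ → ℝ} (hπ : c.IsReversible π) {z : ℤ}
    (hz : z ∈ Icc b a) :
    c.eT z a = ENNReal.ofReal (∑ k ∈ Ico z a, (∑ j ∈ Icc b k, π j) / (π k * c.p k)) := by
  refine c.eT_eq_of_poisson (fun w => ENNReal.ofReal (c.rightPassageSum π w))
    (by simp [rightPassageSum]) (by simp)
    (fun x hx hxa => c.ofReal_eq_one_add_tsum_kernel_mul hπ.rightPassageSum_nonneg ?_) hz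
  linear_combination hπ.rightPassageSum_recurrence (mem_Icc.1 hx).1
    (lt_of_le_of_ne (mem_Icc.1 hx).2 hxa)

variable (c)

lemma bdStep_comp_neg (p q : ℤ → ℝ) (x y : ℤ) :
    bdStep (fun x => q (-x)) (fun x => p (-x)) x y = bdStep p q (-x) (-y) := by
  unfold bdStep
  split_ifs <;> first | rfl | omega | ring_nf

def reflect : BDChain (-a) (-b) where
  p x := c.q (-x)
  q x := c.p (-x)
  law x := (c.law (-x)).map (MeasurableEquiv.neg (ℕ → ℤ))
  prob x := by
    have := c.prob (-x)
    exact Measure.isProbabilityMeasure_map (MeasurableEquiv.neg _).measurable.aemeasurable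
  p_pos x h₁ h₂ := c.q_pos (-x) (by omega) (by omega)
  q_pos x h₁ h₂ := c.p_pos (-x) (by omega) (by omega)
  p_zero x h := c.q_zero (-x) (by omega)
  q_zero x h := c.p_zero (-x) (by omega)
  r_nonneg x h₁ h₂ := by linarith [c.r_nonneg (-x) (by omega) (by omega)]
  init x := by
    rw [MeasurableEquiv.map_apply, ← c.init (-x)]
    congr 1
    ext ω
    simp [neg_eq_iff_eq_neg]
  markov x u n := by
    have hpre (m : ℕ) : MeasurableEquiv.neg (ℕ → ℤ) ⁻¹' {ω | ∀ i ≤ m, ω i = u i}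
        = {ω | ∀ i ≤ m, ω i = (-u) i} := by
      ext ω
      simp [neg_eq_iff_eq_neg]
    rw [MeasurableEquiv.map_apply, MeasurableEquiv.map_apply, hpre, hpre, c.markov,
      bdStep_comp_neg]
    simp

lemma reflect_eT (x y : ℤ) : c.reflect.eT x y = c.eT (-x) (-y) := by
  simp only [eT, reflect]
  rw [lintegral_map_equiv]
  congr 1
  ext ω
  simp only [hitTime, MeasurableEquiv.neg_apply, Pi.neg_apply, Set.mem_singleton_iff,
    neg_eq_iff_eq_neg]

variable {c}

lemma IsReversible.reflect {π : ℤ → ℝ} (h : c.IsReversible π) :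
    c.reflect.IsReversible (fun x => π (-x)) := by
  refine ⟨fun x h₁ h₂ => h.1 (-x) (by omega) (by omega), fun x h₁ h₂ => ?_⟩
  have := h.2 (-x + 1) (by omega) (by omega)
  rw [add_sub_cancel_right] at this
  show π (-x) * c.p (-x) = π (-(x - 1)) * c.q (-(x - 1))
  rw [show -(x - 1) = -x + 1 by ring, this]

lemma IsStationary.reflect {π : ℤ → ℝ} (h : c.IsStationary π) :
    c.reflect.IsStationary (fun x => π (-x)) :=
  ⟨h.isReversible.reflect.1, fun x hx => h.2.1 (-x) (by omega),
    by rw [sum_Icc_neg, neg_neg, neg_neg, h.2.2.1], h.isReversible.reflect.2⟩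

theorem IsReversible.eT_to_left_end {π : ℤ → ℝ} (hπ : c.IsReversible π) {z : ℤ}
    (hz : z ∈ Icc b a) :
    c.eT z b = ENNReal.ofReal (∑ k ∈ Ico b z, (∑ j ∈ Icc (k + 1) a, π j) / (π k * c.p k)) := by
  simp only [mem_Icc] at hz
  have := hπ.reflect.eT_to_right_end (z := -z) (by simp only [mem_Icc]; omega)
  rw [reflect_eT, neg_neg, neg_neg] at this
  rw [this]
  congr 1
  refine sum_nbij' (fun k => -1 - k) (fun k => -1 - k) (fun k hk => ?_) (fun k hk => ?_)
    (fun k _ => by ring) (fun k _ => by ring) (fun k hk => ?_)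
  · simp only [mem_Ico] at hk ⊢; omega
  · simp only [mem_Ico] at hk ⊢; omega
  simp only [mem_Ico] at hk
  have hdb := hπ.2 (-k) (by omega) (by omega)
  rw [show -k - 1 = -1 - k by ring] at hdb
  show _ / (π (-k) * c.q (-k)) = _
  rw [sum_Icc_neg, neg_neg, hdb, show -1 - k + 1 = -k by ring]

end BDChain

theorem right_halfwell_comparison {b a : ℤ} (hb : b ≤ 0) (ha : 0 ≤ a) (X : BDChain b a)
    {π : ℤ → ℝ} (hπ : X.IsStationary π) (Xhat : BDChain 0 a)
    (hhp : ∀ x : ℤ, 0 ≤ x → x ≤ a - 1 → Xhat.p x = X.p x)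
    (hhq : ∀ x : ℤ, 1 ≤ x → x ≤ a → Xhat.q x = X.q x) :
    ENNReal.ofReal (∑ i ∈ Icc 0 a, π i) * X.eT 0 a
        = ENNReal.ofReal (∑ i ∈ Icc b (-1), π i) * Xhat.eT a 0 + Xhat.eT 0 a
      ∧ Xhat.eT 0 a ≤ X.eT 0 a := by
  obtain ⟨hpos, hzero, hsum, hdb⟩ := hπ
  have hπ_nonneg (j : ℤ) : 0 ≤ π j := by
    by_cases hj : b ≤ j ∧ j ≤ a
    · exact (hpos j hj.1 hj.2).le
    · exact (hzero j (by omega)).ge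
  have hhat : Xhat.IsReversible π := by
    refine ⟨fun x h₁ h₂ => hpos x (by omega) h₂, fun x h₁ h₂ => ?_⟩
    rw [hhq x h₁ h₂, hhp (x - 1) (by omega) (by omega)]
    exact hdb x (by omega) h₂
  have hsame (f : ℤ → ℝ) :
      ∑ k ∈ Ico 0 a, f k / (π k * Xhat.p k) = ∑ k ∈ Ico 0 a, f k / (π k * X.p k) :=
    sum_congr rfl fun k hk => by rw [hhp k (mem_Ico.1 hk).1 (by have := (mem_Ico.1 hk).2; omega)]
  have hmass (s : Finset ℤ) : 0 ≤ ∑ j ∈ s, π j := sum_nonneg fun j _ => hπ_nonneg j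
  have hweight (s : Finset ℤ) (k : ℤ) : 0 ≤ (∑ j ∈ s, π j) / (π k * X.p k) :=
    div_nonneg (hmass s) (mul_nonneg (hπ_nonneg k) (X.p_nonneg k))
  rw [BDChain.IsReversible.eT_to_right_end ⟨hpos, hdb⟩ (by simp [hb, ha]),
    hhat.eT_to_right_end (by simp [ha]), hhat.eT_to_left_end (by simp [ha]), hsame, hsame]
  constructor
  · rw [← ENNReal.ofReal_mul (hmass _), ← ENNReal.ofReal_mul (hmass _),
      ← ENNReal.ofReal_add (mul_nonneg (hmass _) (sum_nonneg fun k _ => hweight _ k))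
        (sum_nonneg fun k _ => hweight _ k), mass_mul_sum_div_eq π _ hb hsum]
  · refine ENNReal.ofReal_le_ofReal (sum_le_sum fun k _ => ?_)
    exact div_le_div_of_nonneg_right
      (sum_le_sum_of_subset_of_nonneg (Icc_subset_Icc hb le_rfl) fun j _ _ => hπ_nonneg j)
      (mul_nonneg (hπ_nonneg k) (X.p_nonneg k))

/-- Comparison with half-well versions: for an irreducible
birth-and-death chain `X` on `⟦b,a⟧` (`b ≤ 0 < a`) with invariant measure `π`, and
its right half-well version `Xhat` on `⟦0,a⟧` (same rates on `⟦1,a⟧`, `p̂₀ = p₀`,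
`q̂₀ = 0`) and left half-well version `Xchk` on `⟦b,0⟧` (same rates on `⟦b,-1⟧`,
`q̌₀ = q₀`, `p̌₀ = 0`):
`E[T_{0→a}] = (π(⟦b,-1⟧) E[T̂_{a→0}] + E[T̂_{0→a}]) / π(⟦0,a⟧) ≥ E[T̂_{0→a}]`, and
`E[T_{0→b}] = (π(⟦1,a⟧) E[Ť_{b→0}] + E[Ť_{0→b}]) / π(⟦b,0⟧) ≥ E[Ť_{0→b}]`
(the identities are stated with the denominators cleared, an equivalent form in `ℝ≥0∞`). -/
theorem halfwell_comparison {b a : ℤ} (hb : b ≤ 0) (ha : 0 < a)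
    (X : BDChain b a) (π : ℤ → ℝ) (hπ : X.IsStationary π)
    (Xhat : BDChain 0 a)
    (hhp : ∀ x : ℤ, 0 ≤ x → x ≤ a - 1 → Xhat.p x = X.p x)
    (hhq : ∀ x : ℤ, 1 ≤ x → x ≤ a → Xhat.q x = X.q x)
    (Xchk : BDChain b 0)
    (hcp : ∀ x : ℤ, b ≤ x → x ≤ -1 → Xchk.p x = X.p x)
    (hcq : ∀ x : ℤ, b + 1 ≤ x → x ≤ 0 → Xchk.q x = X.q x) :
    (ENNReal.ofReal (∑ i ∈ Finset.Icc (0 : ℤ) a, π i) * X.eT 0 a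
        = ENNReal.ofReal (∑ i ∈ Finset.Icc b (-1 : ℤ), π i) * Xhat.eT a 0 + Xhat.eT 0 a
      ∧ Xhat.eT 0 a ≤ X.eT 0 a) ∧
    (ENNReal.ofReal (∑ i ∈ Finset.Icc b (0 : ℤ), π i) * X.eT 0 b
        = ENNReal.ofReal (∑ i ∈ Finset.Icc (1 : ℤ) a, π i) * Xchk.eT b 0 + Xchk.eT 0 b
      ∧ Xchk.eT 0 b ≤ X.eT 0 b) := by
  refine ⟨right_halfwell_comparison hb ha.le X hπ Xhat hhp hhq, ?_⟩
  have h := right_halfwell_comparison (by omega) (by omega) X.reflect hπ.reflect Xchk.reflect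
    (fun x h₁ h₂ => hcq (-x) (by omega) (by omega)) (fun x h₁ h₂ => hcp (-x) (by omega) (by omega))
  simpa [BDChain.reflect_eT, sum_Icc_neg] using h
end
end

section
/- Let X be an irreducible birth-and-death chain on ⟦b,a⟧ (b ≤ 0 < a) with reversible invariant probability measure π, and set K := sup_{x∈⟦0,a⟧} π(⟦x,a⟧) / π(x). Then K ≥ 1 and for every integer 0 ≤ x ≤ a: π(x) ≤ π(⟦x,a⟧) ≤ (1 − 1/K)^x, i.e. π(⟦x,a⟧) ≤ e^{−αx} with α := −log(1 − 1/K). -/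
open MeasureTheory Filter Topology ENNReal ProbabilityTheory

noncomputable section

/-- For an irreducible birth-and-death chain on `⟦b,a⟧`
(`b ≤ 0 < a`) with reversible invariant probability measure `π`, let
`K = sup_{x ∈ ⟦0,a⟧} π(⟦x,a⟧)/π(x)`. Then `K ≥ 1` and for every `0 ≤ x ≤ a`:
`π(x) ≤ π(⟦x,a⟧) ≤ (1 - 1/K)^x = e^{-αx}` with `α = -log(1 - 1/K)`. -/
theorem exponential_tail_bound {b a : ℤ} (hb : b ≤ 0) (ha : 0 < a)
    (X : BDChain b a) (π : ℤ → ℝ) (hπ : X.IsStationary π) (K : ℝ)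
    (hK : IsLUB ((fun x => (∑ i ∈ Finset.Icc x a, π i) / π x) '' Set.Icc 0 a) K) :
    1 ≤ K ∧ ∀ x : ℤ, 0 ≤ x → x ≤ a →
      π x ≤ (∑ i ∈ Finset.Icc x a, π i) ∧
      (∑ i ∈ Finset.Icc x a, π i) ≤ (1 - 1 / K) ^ x.toNat ∧
      (∑ i ∈ Finset.Icc x a, π i) ≤ Real.exp (-(-Real.log (1 - 1 / K)) * (x : ℝ)) := by
  obtain ⟨hpos, hzero, hsum, -⟩ := hπ
  set S : ℤ → ℝ := fun x => ∑ i ∈ Finset.Icc x a, π i with hS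
  have hπnn : ∀ i, 0 ≤ π i := by
    intro i
    rcases lt_or_ge i b with h | h
    · exact le_of_eq (hzero i (Or.inl h)).symm
    rcases le_or_gt i a with h' | h'
    · exact (hpos i h h').le
    · exact le_of_eq (hzero i (Or.inr h')).symm
  have hsplit : ∀ x : ℤ, x ≤ a → S x = π x + S (x + 1) := by
    intro x hx
    have hins : Finset.Icc x a = insert x (Finset.Icc (x + 1) a) := by
      ext i; simp only [Finset.mem_Icc, Finset.mem_insert]; omega
    have hnm : x ∉ Finset.Icc (x + 1) a := by simp [Finset.mem_Icc]
    simp [hS, hins, Finset.sum_insert hnm]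
  have hπleS : ∀ x : ℤ, b ≤ x → x ≤ a → π x ≤ S x := by
    intro x hxb hxa
    exact Finset.single_le_sum (fun i _ => hπnn i) (Finset.mem_Icc.mpr ⟨le_refl x, hxa⟩)
  have hSle1 : ∀ x : ℤ, b ≤ x → S x ≤ 1 := by
    intro x hx
    rw [← hsum]
    apply Finset.sum_le_sum_of_subset_of_nonneg
    · intro i hi; simp only [Finset.mem_Icc] at *; omega
    · intro i _ _; exact hπnn i
  have hub : ∀ x : ℤ, 0 ≤ x → x ≤ a → S x / π x ≤ K := by
    intro x hx0 hxa
    exact hK.1 ⟨x, ⟨hx0, hxa⟩, rfl⟩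
  -- K > 1
  have hK1 : 1 < K := by
    have h0a : (0 : ℤ) ≤ a := ha.le
    have h1a : (1 : ℤ) ≤ a := ha
    have hp0 : 0 < π 0 := hpos 0 hb h0a
    have hS1 : 0 < S 1 := lt_of_lt_of_le (hpos 1 (by omega) h1a) (hπleS 1 (by omega) h1a)
    have h : S 0 = π 0 + S 1 := by simpa using hsplit 0 h0a
    have : 1 < S 0 / π 0 := by
      rw [lt_div_iff₀ hp0, one_mul, h]; linarith
    exact lt_of_lt_of_le this (hub 0 le_rfl h0a)
  have hKpos : 0 < K := lt_trans one_pos hK1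
  have hfrac : 0 < 1 - 1 / K := by
    have : 1 / K < 1 := by rw [div_lt_one hKpos]; exact hK1
    linarith
  -- main induction
  have main : ∀ n : ℕ, (n : ℤ) ≤ a → S (n : ℤ) ≤ (1 - 1 / K) ^ n := by
    intro n
    induction n with
    | zero => intro _; simpa using hSle1 0 hb
    | succ n ih =>
      intro hna
      have hn : (n : ℤ) ≤ a := by push_cast at hna ⊢; omega
      have hn0 : (0 : ℤ) ≤ (n : ℤ) := Int.natCast_nonneg n
      have hp : 0 < π (n : ℤ) := hpos _ (by omega) hn
      have hd : S (n : ℤ) / π (n : ℤ) ≤ K := hub _ hn0 hn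
      have h1 : S (n : ℤ) ≤ K * π (n : ℤ) := by
        rw [div_le_iff₀ hp] at hd; linarith
      have h2 : S (n : ℤ) / K ≤ π (n : ℤ) := by
        rw [div_le_iff₀ hKpos]; linarith
      have hsp : S ((n : ℤ) + 1) = S (n : ℤ) - π (n : ℤ) := by
        have := hsplit (n : ℤ) hn; linarith
      have hSnn : 0 ≤ S ((n : ℤ) + 1) := Finset.sum_nonneg (fun i _ => hπnn i)
      have hstep : S ((n : ℤ) + 1) ≤ S (n : ℤ) * (1 - 1 / K) := by
        rw [hsp, mul_sub, mul_one, mul_one_div]; linarith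
      have hcast : ((n : ℤ) + 1) = ((n + 1 : ℕ) : ℤ) := by push_cast; ring
      calc S ((n + 1 : ℕ) : ℤ) = S ((n : ℤ) + 1) := by rw [hcast]
        _ ≤ S (n : ℤ) * (1 - 1 / K) := hstep
        _ ≤ (1 - 1 / K) ^ n * (1 - 1 / K) :=
            mul_le_mul_of_nonneg_right (ih hn) hfrac.le
        _ = (1 - 1 / K) ^ (n + 1) := by ring
  refine ⟨hK1.le, fun x hx0 hxa => ?_⟩
  have hxcast : ((x.toNat : ℕ) : ℤ) = x := Int.toNat_of_nonneg hx0
  have hSbound : S x ≤ (1 - 1 / K) ^ x.toNat := by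
    have := main x.toNat (by rw [hxcast]; exact hxa)
    rwa [hxcast] at this
  refine ⟨hπleS x (by omega) hxa, hSbound, ?_⟩
  have hxr : (x : ℝ) = ((x.toNat : ℕ) : ℝ) := by exact_mod_cast hxcast.symm
  have hexp : Real.exp (-(-Real.log (1 - 1 / K)) * (x : ℝ)) = (1 - 1 / K) ^ x.toNat := by
    rw [neg_neg, hxr, ← Real.rpow_def_of_pos hfrac, Real.rpow_natCast]
  rw [hexp]; exact hSbound
end
end
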